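/- Let F be a continuous strictly increasing distribution function, U the inverse of 1/(1−F), q := U∘exp, and suppose log q ∈ ERV_ρ(g) (locally uniformly). Given a threshold sequence y_n → ∞ with y_n = o of the extrapolation range in the sense that for T > 1, eventually [T^{-1} log n, T log n] ⊆ [y_n/λ, y_n λ] for some λ > 1, and given estimating functions ρ̄(y) → ρ a.s. and ḡ(y) ~ g(y) a.s. (positive), the estimator q̂ⁿ(z) := q(y_n) exp(ḡ(y_n) h_{ρ̄(y_n)}(z/y_n)) satisfies: for every T > 1, sup_{τ∈[1/T,T]} |(log q̂ⁿ(τ log n) − log q(τ log n))/log q(y_n)| → 0 a.s. as n → ∞. -/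

import Mathlib

/-!
Write `f = log q`. At `z = τ log n = y_n l`, with `l ∈ [λ⁻¹, λ]`, the relative error equals
`(g / f)(y_n) * ((ḡ / g)(y_n) * h_{ρ̄(y_n)}(l) - (f (y_n l) - f (y_n)) / g (y_n))`.
The bracket tends to `0` uniformly in `l`: its first term because `(ρ, r, l) ↦ r h_ρ(l)` is jointly
continuous, its second by Pólya's theorem, being monotone in `l` (`q` increases) with the continuous
pointwise limit `h_ρ(l)`. The prefactor stays bounded since
`f (y) ≥ f (y) - f (y / 2) ~ -h_ρ(1/2) g (y)` with `h_ρ(1/2) < 0`.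
-/

open Filter Real

noncomputable def h (ρ lam : ℝ) : ℝ := if ρ = 0 then Real.log lam else (lam ^ ρ - 1) / ρ

open Set Function Topology

theorem h_neg_of_lt_one (ρ : ℝ) {l : ℝ} (hl0 : 0 < l) (hl1 : l < 1) : h ρ l < 0 := by
  unfold h
  split_ifs with hρ
  · exact log_neg hl0 hl1
  · rcases lt_or_gt_of_ne hρ with hρ | hρ
    · exact div_neg_of_pos_of_neg (sub_pos.2 (one_lt_rpow_of_pos_of_lt_one_of_neg hl0 hl1 hρ)) hρ
    · exact div_neg_of_neg_of_pos (sub_neg.2 (rpow_lt_one hl0.le hl1 hρ)) hρ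

/-- `dslope exp 0 x = (exp x - 1) / x` removes the apparent singularity of `h` at `ρ = 0`. -/
theorem h_eq_log_mul_dslope_exp (ρ : ℝ) {l : ℝ} (hl : 0 < l) :
    h ρ l = log l * dslope exp 0 (ρ * log l) := by
  rcases eq_or_ne ρ 0 with rfl | hρ
  · simp [h, dslope_same]
  · have hslope := sub_smul_dslope exp 0 (ρ * log l)
    rw [sub_zero, smul_eq_mul, exp_zero, mul_assoc] at hslope
    rw [h, if_neg hρ, rpow_def_of_pos hl, mul_comm (log l) ρ, ← hslope,
      mul_div_cancel_left₀ _ hρ]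

theorem continuousOn_h : ContinuousOn (fun p : ℝ × ℝ => h p.1 p.2) (univ ×ˢ Ioi 0) := by
  have hdslope : Continuous (dslope exp 0) := continuousOn_univ.1 <|
    (continuousOn_dslope univ_mem).2 ⟨continuous_exp.continuousOn, differentiableAt_exp⟩
  have hlog : ContinuousOn (fun p : ℝ × ℝ => log p.2) (univ ×ˢ Ioi 0) :=
    continuousOn_snd.log fun p hp => (mem_Ioi.1 hp.2).ne'
  exact (hlog.mul (hdslope.comp_continuousOn (continuousOn_fst.mul hlog))).congr
    fun p hp => h_eq_log_mul_dslope_exp p.1 hp.2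

theorem IsCompact.tendstoUniformlyOn_of_continuousOn_prod {α β E : Type*} [TopologicalSpace α]
    [TopologicalSpace β] [UniformSpace E] {f : α → β → E} {s : Set α} {k : Set β} {q : α}
    (hk : IsCompact k) (hf : ContinuousOn (uncurry f) (s ×ˢ k)) (hq : q ∈ s) :
    TendstoUniformlyOn f (f q) (𝓝[s] q) k := fun _u hu => by
  obtain ⟨v, hv, hfv⟩ := hk.mem_uniformity_of_prod hf hq (symm_le_uniformity hu)
  exact mem_of_superset hv fun p hp x hx => hfv p hp x hx

theorem tendstoUniformlyOn_Icc_of_monotoneOn {ι : Type*} {p : Filter ι} {F : ι → ℝ → ℝ}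
    {φ : ℝ → ℝ} {a b : ℝ} (hF : ∀ᶠ i in p, MonotoneOn (F i) (Icc a b))
    (hlim : ∀ x ∈ Icc a b, Tendsto (fun i => F i x) p (𝓝 (φ x)))
    (hφ : ContinuousOn φ (Icc a b)) :
    TendstoUniformlyOn F φ p (Icc a b) := by
  refine (tendstoLocallyUniformlyOn_iff_tendstoUniformlyOn_of_compact isCompact_Icc).1 ?_
  refine Metric.tendstoLocallyUniformlyOn_iff.2 fun ε hε x₀ hx₀ => ?_
  have hε3 : 0 < ε / 3 := by positivity
  obtain ⟨δ, hδ, hφδ⟩ := Metric.continuousWithinAt_iff.1 (hφ x₀ hx₀) (ε / 3) hε3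
  have hclose : ∀ x ∈ Icc a b, |x - x₀| < δ → |φ x - φ x₀| < ε / 3 := fun x hx hxδ => by
    simpa only [Real.dist_eq] using hφδ hx (by rwa [Real.dist_eq])
  set lo := max a (x₀ - δ / 2)
  set hi := min b (x₀ + δ / 2)
  have hlo : lo ∈ Icc a b := ⟨le_max_left _ _, max_le (hx₀.1.trans hx₀.2) (by linarith [hx₀.2])⟩
  have hhi : hi ∈ Icc a b := ⟨le_min (hx₀.1.trans hx₀.2) (by linarith [hx₀.1]), min_le_left _ _⟩
  have hφlo := hclose lo hlo <| abs_sub_lt_iff.2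
    ⟨by linarith [max_le hx₀.1 (by linarith : x₀ - δ / 2 ≤ x₀)],
      by linarith [le_max_right a (x₀ - δ / 2)]⟩
  have hφhi := hclose hi hhi <| abs_sub_lt_iff.2
    ⟨by linarith [min_le_right b (x₀ + δ / 2)],
      by linarith [le_min hx₀.2 (by linarith : x₀ ≤ x₀ + δ / 2)]⟩
  -- on this neighbourhood `F i x` is squeezed between `F i lo` and `F i hi`
  refine ⟨Icc a b ∩ Ioo (x₀ - δ / 2) (x₀ + δ / 2),
    inter_mem_nhdsWithin _ (Ioo_mem_nhds (by linarith) (by linarith)), ?_⟩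
  filter_upwards [hF, (hlim lo hlo).eventually (Metric.ball_mem_nhds _ hε3),
    (hlim hi hhi).eventually (Metric.ball_mem_nhds _ hε3)]
    with i hmono hFlo hFhi x ⟨hx, hxδ⟩
  have hφx := hclose x hx (abs_sub_lt_iff.2 ⟨by linarith [hxδ.2], by linarith [hxδ.1]⟩)
  have hFx_lo := hmono hlo hx (max_le hx.1 hxδ.1.le)
  have hFx_hi := hmono hx hhi (le_min hx.2 hxδ.2.le)
  rw [Real.dist_eq, abs_sub_lt_iff] at hFlo hFhi
  rw [abs_sub_lt_iff] at hφlo hφhi hφx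
  rw [Real.dist_eq, abs_sub_lt_iff]
  constructor <;> linarith

theorem tendstoUniformlyOn_mul_h {ι : Type*} {p : Filter ι} {r ρb : ι → ℝ} {ρ a b : ℝ}
    (ha : 0 < a) (hρb : Tendsto ρb p (𝓝 ρ)) (hr : Tendsto r p (𝓝 1)) :
    TendstoUniformlyOn (fun i l => r i * h (ρb i) l) (h ρ) p (Icc a b) := by
  have hcont : ContinuousOn (uncurry fun (q : ℝ × ℝ) l => q.2 * h q.1 l) (univ ×ˢ Icc a b) :=
    (continuous_fst.snd.continuousOn).mul <| continuousOn_h.comp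
      (continuous_fst.fst.prodMk continuous_snd).continuousOn
      fun x hx => ⟨mem_univ _, ha.trans_le hx.2.1⟩
  have hunif := isCompact_Icc.tendstoUniformlyOn_of_continuousOn_prod hcont (mem_univ (ρ, 1))
  rw [nhdsWithin_univ] at hunif
  simp only [one_mul] at hunif
  exact fun u hu => (hρb.prodMk_nhds hr).eventually (hunif u hu)

theorem tendstoUniformlyOn_of_erv {f g : ℝ → ℝ} {ρ z₀ a b : ℝ} (ha : 0 < a)
    (hg : ∀ z, 0 < g z) (hmono : MonotoneOn f (Ici z₀))
    (hERV : ∀ l, 0 < l → Tendsto (fun z => (f (z * l) - f z) / g z) atTop (𝓝 (h ρ l))) :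
    TendstoUniformlyOn (fun z l => (f (z * l) - f z) / g z) (h ρ) atTop (Icc a b) := by
  have hcont : ContinuousOn (h ρ) (Icc a b) :=
    continuousOn_h.comp (continuous_const.prodMk continuous_id).continuousOn
      fun l hl => ⟨mem_univ _, ha.trans_le hl.1⟩
  refine tendstoUniformlyOn_Icc_of_monotoneOn ?_ (fun l hl => hERV l (ha.trans_le hl.1)) hcont
  filter_upwards [eventually_ge_atTop (z₀ / a), eventually_gt_atTop 0]
    with z hz hz0 l hl m hm hlm
  have hzl : z₀ ≤ z * l :=
    ((div_le_iff₀ ha).1 hz).trans (mul_le_mul_of_nonneg_left hl.1 hz0.le)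
  have hfzm := hmono hzl (hzl.trans (mul_le_mul_of_nonneg_left hlm hz0.le))
    (mul_le_mul_of_nonneg_left hlm hz0.le)
  exact div_le_div_of_nonneg_right (sub_le_sub_right hfzm _) (hg z).le

theorem exists_pos_mul_le_of_erv {f g : ℝ → ℝ} {ρ l : ℝ} (hl0 : 0 < l) (hl1 : l < 1)
    (hg : ∀ z, 0 < g z) (hf : ∀ᶠ z in atTop, 0 ≤ f z)
    (hERV : Tendsto (fun z => (f (z * l) - f z) / g z) atTop (𝓝 (h ρ l))) :
    ∃ c > 0, ∀ᶠ z in atTop, c * g z ≤ f z := by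
  have hneg := h_neg_of_lt_one ρ hl0 hl1
  refine ⟨-h ρ l / 2, by linarith, ?_⟩
  filter_upwards [hERV.eventually (eventually_lt_nhds (by linarith : h ρ l < h ρ l / 2)),
    (tendsto_id.atTop_mul_const hl0).eventually hf] with z hz (hfzl : 0 ≤ f (z * l))
  rw [div_lt_iff₀ (hg z)] at hz
  linarith

theorem strictMonoOn_of_one_div_one_sub_comp_eq {F U : ℝ → ℝ} (hF : StrictMono F)
    (hU : ∀ t : ℝ, 1 < t → 1 / (1 - F (U t)) = t) : StrictMonoOn U (Ioi 1) := by
  have hFU : ∀ t : ℝ, 1 < t → F (U t) = 1 - t⁻¹ := fun t ht => by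
    have hFUt := hU t ht
    rw [one_div, inv_eq_iff_eq_inv] at hFUt
    linarith
  intro s hs t ht hst
  refine hF.lt_iff_lt.1 ?_
  rw [hFU s hs, hFU t ht]
  linarith [(inv_lt_inv₀ (zero_lt_one.trans ht) (zero_lt_one.trans hs)).2 hst]

theorem exists_monotoneOn_log_comp_comp_exp {U : ℝ → ℝ} (hU : MonotoneOn U (Ioi 1))
    (hU1 : ∀ᶠ z in atTop, 1 < U (exp z)) :
    ∃ z₀, MonotoneOn (fun z => log (U (exp z))) (Ici z₀) := by
  obtain ⟨z₁, hz₁⟩ := eventually_atTop.1 hU1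
  refine ⟨max z₁ 1, fun a ha b hb hab => ?_⟩
  have hexp : ∀ z ∈ Ici (max z₁ 1), exp z ∈ Ioi 1 := fun z hz =>
    one_lt_exp_iff.2 (by linarith [le_of_max_le_right (mem_Ici.1 hz)])
  exact log_le_log (zero_lt_one.trans (hz₁ a (le_of_max_le_left ha)))
    (hU (hexp a ha) (hexp b hb) (exp_le_exp.2 hab))

theorem eventually_abs_penultimate_error_lt {f g gb ρb : ℝ → ℝ} {ρ z₀ a b ε : ℝ}
    (ha : 0 < a) (hε : 0 < ε) (hg : ∀ z, 0 < g z) (hf : ∀ᶠ z in atTop, 0 ≤ f z)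
    (hmono : MonotoneOn f (Ici z₀))
    (hERV : ∀ l, 0 < l → Tendsto (fun z => (f (z * l) - f z) / g z) atTop (𝓝 (h ρ l)))
    (hρb : Tendsto ρb atTop (𝓝 ρ)) (hgb : Tendsto (fun z => gb z / g z) atTop (𝓝 1)) :
    ∀ᶠ z in atTop, ∀ l ∈ Icc a b, |(f z + gb z * h (ρb z) l - f (z * l)) / f z| < ε := by
  obtain ⟨c, hc, hcf⟩ := exists_pos_mul_le_of_erv (by norm_num : (0 : ℝ) < 2⁻¹) (by norm_num)
    hg hf (hERV 2⁻¹ (by norm_num))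
  have hD := (tendstoUniformlyOn_mul_h (b := b) ha hρb hgb).fun_sub
    (tendstoUniformlyOn_of_erv ha hg hmono hERV)
  simp only [sub_self] at hD
  filter_upwards [Metric.tendstoUniformlyOn_iff.1 hD (c * ε) (by positivity), hcf]
    with z hDz hcz l hl
  have hDzl := hDz l hl
  rw [dist_zero_left, Real.norm_eq_abs] at hDzl
  have hgz := hg z
  have hfz : 0 < f z := (mul_pos hc hgz).trans_le hcz
  have hnum : f z + gb z * h (ρb z) l - f (z * l) =
      g z * (gb z / g z * h (ρb z) l - (f (z * l) - f z) / g z) := by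
    field_simp
    ring
  rw [hnum, abs_div, abs_mul, abs_of_pos hgz, abs_of_pos hfz, div_lt_iff₀ hfz]
  linarith [mul_lt_mul_of_pos_left hDzl hgz, mul_le_mul_of_nonneg_left hcz hε.le]

theorem stmt18_general (F U g ρb gb : ℝ → ℝ) (ρ : ℝ) (y : ℕ → ℝ)
    (hFmono : StrictMono F)
    (hU : ∀ t : ℝ, 1 < t → 1 / (1 - F (U t)) = t)
    (hq1 : ∀ᶠ z in atTop, 1 < U (Real.exp z))
    (hgpos : ∀ z, 0 < g z)
    (hERV : ∀ l : ℝ, 0 < l →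
      Tendsto
        (fun z => (Real.log (U (Real.exp (z * l))) - Real.log (U (Real.exp z))) / g z)
        atTop (nhds (h ρ l)))
    (hy : Tendsto y atTop atTop)
    (hincl : ∀ T : ℝ, 1 < T → ∃ lam : ℝ, 1 < lam ∧ ∀ᶠ n : ℕ in atTop,
      Set.Icc (T⁻¹ * Real.log n) (T * Real.log n) ⊆
        Set.Icc (y n / lam) (y n * lam))
    (hρb : Tendsto ρb atTop (nhds ρ))
    (hgb : Tendsto (fun z => gb z / g z) atTop (nhds 1)) :
    ∀ T : ℝ, 1 < T → ∀ ε : ℝ, 0 < ε → ∀ᶠ n : ℕ in atTop,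
      ∀ τ ∈ Set.Icc T⁻¹ T,
        |(Real.log (U (Real.exp (y n)) *
              Real.exp (gb (y n) * h (ρb (y n)) (τ * Real.log n / y n))) -
            Real.log (U (Real.exp (τ * Real.log n)))) /
          Real.log (U (Real.exp (y n)))| < ε := by
  intro T hT ε hε
  obtain ⟨lam, hlam, hincl⟩ := hincl T hT
  obtain ⟨z₀, hmono⟩ := exists_monotoneOn_log_comp_comp_exp
    (strictMonoOn_of_one_div_one_sub_comp_eq hFmono hU).monotoneOn hq1
  have hcore := eventually_abs_penultimate_error_lt (b := lam)
    (inv_pos.2 (zero_lt_one.trans hlam)) hε hgpos (hq1.mono fun z hz => (log_pos hz).le) hmono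
    hERV hρb hgb
  filter_upwards [hincl, hy.eventually hcore, hy.eventually hq1, hy.eventually_gt_atTop 0]
    with n hincl_n hcore_n hU_n hy_n τ hτ
  have hlogn := log_natCast_nonneg n
  have hmem := hincl_n
    ⟨mul_le_mul_of_nonneg_right hτ.1 hlogn, mul_le_mul_of_nonneg_right hτ.2 hlogn⟩
  have hl : τ * log n / y n ∈ Icc lam⁻¹ lam :=
    ⟨by rw [le_div_iff₀ hy_n, ← div_eq_inv_mul]; exact hmem.1,
      (div_le_iff₀ hy_n).2 (by linarith [hmem.2])⟩
  rw [log_mul (zero_lt_one.trans hU_n).ne' (exp_ne_zero _), log_exp]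
  simpa only [mul_div_cancel₀ _ hy_n.ne'] using hcore_n _ hl

theorem stmt18 (F U g ρb gb : ℝ → ℝ) (ρ : ℝ) (y : ℕ → ℝ)
    (hFcont : Continuous F) (hFmono : StrictMono F)
    (hF0 : ∀ x, 0 ≤ F x) (hF1 : ∀ x, F x ≤ 1)
    (hU : ∀ t : ℝ, 1 < t → 1 / (1 - F (U t)) = t)
    (hq1 : ∀ᶠ z in atTop, 1 < U (Real.exp z))
    (hgpos : ∀ z, 0 < g z) (hgbpos : ∀ z, 0 < gb z)
    (hERV : ∀ l : ℝ, 0 < l →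
      Tendsto
        (fun z => (Real.log (U (Real.exp (z * l))) - Real.log (U (Real.exp z))) / g z)
        atTop (nhds (h ρ l)))
    (hy : Tendsto y atTop atTop)
    (hincl : ∀ T : ℝ, 1 < T → ∃ lam : ℝ, 1 < lam ∧ ∀ᶠ n : ℕ in atTop,
      Set.Icc (T⁻¹ * Real.log n) (T * Real.log n) ⊆
        Set.Icc (y n / lam) (y n * lam))
    (hρb : Tendsto ρb atTop (nhds ρ))
    (hgb : Tendsto (fun z => gb z / g z) atTop (nhds 1)) :
    ∀ T : ℝ, 1 < T → ∀ ε : ℝ, 0 < ε → ∀ᶠ n : ℕ in atTop,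
      ∀ τ ∈ Set.Icc T⁻¹ T,
        |(Real.log (U (Real.exp (y n)) *
              Real.exp (gb (y n) * h (ρb (y n)) (τ * Real.log n / y n))) -
            Real.log (U (Real.exp (τ * Real.log n)))) /
          Real.log (U (Real.exp (y n)))| < ε :=
  stmt18_general F U g ρb gb ρ y hFmono hU hq1 hgpos hERV hy hincl hρb hgb
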